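/- Condition (A4) for the fractional drift kernel (part of the paper's Example 2.2): For every H > 0 and T > 0 there exists a constant C > 0, depending only on H and T, such that for every partition π of [0,T] with mesh δ_π and left-endpoint map η_π, and every t ∈ [0,T], one has ∫_0^t |(t−s)^{H−1} − (t−η_π(s))^{H−1}| ds ≤ C δ_π^{min(H,1)}. -/

import Mathlib

open MeasureTheory Set

/-- A partition `0 = t_0 < t_1 < ⋯ < t_n = T` of the interval `[0,T]`. -/
structure TimePartition (T : ℝ) where
  n : ℕ
  t : ℕ → ℝ
  npos : 0 < n
  zero : t 0 = 0
  last : t n = T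
  lt : ∀ k, k < n → t k < t (k + 1)

/-- The mesh `δ_π = max_{0 ≤ k ≤ n-1} (t_{k+1} - t_k)` of a partition. -/
noncomputable def TimePartition.mesh {T : ℝ} (π : TimePartition T) : ℝ :=
  (Finset.range π.n).sup' (Finset.nonempty_range_iff.mpr π.npos.ne')
    (fun k => π.t (k + 1) - π.t k)

/-- `η` is the left-endpoint map of the partition `π`: `η s = t_k` for `s ∈ [t_k, t_{k+1})`. -/
def IsLeftEndpointMap {T : ℝ} (π : TimePartition T) (η : ℝ → ℝ) : Prop :=
  ∀ s : ℝ, ∀ k, k < π.n → π.t k ≤ s → s < π.t (k + 1) → η s = π.t k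

/-! Since `t - s ≤ t - η s ≤ t - s + δ` and `x ↦ x^{H-1}` is monotone, the integrand is
dominated by the difference of the kernel and its translate by the mesh `δ`, which has constant
sign and integrates to `|t^H + δ^H - (t+δ)^H| / H`. For `H ≤ 1` this is at most `δ^H / H` by
monotonicity of `x ↦ x^H`; for `H ≥ 1` it is at most `(t+δ)^{H-1} δ` by convexity, and
`t + δ ≤ 2T`. -/

namespace TimePartition

variable {T : ℝ} (π : TimePartition T)

theorem strictMonoOn_t : StrictMonoOn π.t (Iic π.n) :=
  strictMonoOn_Iic_of_lt_succ fun k hk => by simpa [Order.succ_eq_add_one] using π.lt k hk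

theorem sub_le_mesh {k : ℕ} (hk : k < π.n) : π.t (k + 1) - π.t k ≤ π.mesh :=
  Finset.le_sup' (fun k => π.t (k + 1) - π.t k) (Finset.mem_range.mpr hk)

theorem mesh_nonneg : 0 ≤ π.mesh :=
  (sub_pos.mpr (π.lt 0 π.npos)).le.trans (π.sub_le_mesh π.npos)

theorem mesh_le : π.mesh ≤ T := by
  refine Finset.sup'_le _ _ fun k hk => ?_
  have hk : k < π.n := Finset.mem_range.mp hk
  have h0 : π.t 0 ≤ π.t k :=
    π.strictMonoOn_t.monotoneOn (mem_Iic.mpr (by omega)) (mem_Iic.mpr hk.le) (by omega)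
  have hn : π.t (k + 1) ≤ π.t π.n :=
    π.strictMonoOn_t.monotoneOn (mem_Iic.mpr hk) (mem_Iic.mpr le_rfl) hk
  linarith [π.zero, π.last]

theorem exists_mem_Ico {s : ℝ} (h0 : 0 ≤ s) (hs : s < T) :
    ∃ k < π.n, s ∈ Ico (π.t k) (π.t (k + 1)) := by
  have hsn : s < π.t π.n := π.last.symm ▸ hs
  have hex : ∃ m, s < π.t m := ⟨π.n, hsn⟩
  have hpos : Nat.find hex ≠ 0 := fun h => by
    have := Nat.find_spec hex
    rw [h, π.zero] at this
    linarith
  obtain ⟨k, hk⟩ := Nat.exists_eq_add_one_of_ne_zero hpos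
  have hsk : s < π.t (k + 1) := by simpa [← hk] using Nat.find_spec hex
  refine ⟨k, ?_, not_lt.mp (Nat.find_min hex (by omega)), hsk⟩
  have := Nat.find_min' hex hsn
  omega

end TimePartition

theorem IsLeftEndpointMap.le_and_le_add_mesh {T : ℝ} {π : TimePartition T} {η : ℝ → ℝ}
    (hη : IsLeftEndpointMap π η) {s : ℝ} (h0 : 0 ≤ s) (hs : s < T) :
    η s ≤ s ∧ s ≤ η s + π.mesh := by
  obtain ⟨k, hk, hsk⟩ := π.exists_mem_Ico h0 hs
  rw [hη s k hk hsk.1 hsk.2]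
  exact ⟨hsk.1, by linarith [hsk.2, π.sub_le_mesh hk]⟩

theorem abs_rpow_sub_rpow_le_of_le {p u v w : ℝ} (hu : 0 < u) (huv : u ≤ v) (hvw : v ≤ w) :
    |u ^ p - v ^ p| ≤ |u ^ p - w ^ p| := by
  rcases le_total 0 p with hp | hp
  · have h₁ := Real.rpow_le_rpow hu.le huv hp
    have h₂ := Real.rpow_le_rpow (hu.le.trans huv) hvw hp
    rw [abs_sub_comm, abs_of_nonneg (by linarith), abs_sub_comm, abs_of_nonneg (by linarith)]
    linarith
  · have h₁ := Real.rpow_le_rpow_of_nonpos hu huv hp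
    have h₂ := Real.rpow_le_rpow_of_nonpos (hu.trans_le huv) hvw hp
    rw [abs_of_nonneg (by linarith), abs_of_nonneg (by linarith)]
    linarith

theorem integral_abs_eq_abs_integral {α : Type*} [MeasurableSpace α] {μ : Measure α}
    {f : α → ℝ} (hf : 0 ≤ᵐ[μ] f ∨ f ≤ᵐ[μ] 0) : ∫ x, |f x| ∂μ = |∫ x, f x ∂μ| := by
  rcases hf with hf | hf
  · rw [abs_of_nonneg (integral_nonneg_of_ae hf)]
    exact integral_congr_ae (hf.mono fun x hx => abs_of_nonneg hx)
  · rw [abs_of_nonpos (integral_nonpos_of_ae hf), ← integral_neg]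
    exact integral_congr_ae (hf.mono fun x hx => abs_of_nonpos hx)

theorem integrableOn_Ioo_rpow_sub {p a t : ℝ} (hp : -1 < p) :
    IntegrableOn (fun s => (a - s) ^ p) (Ioo 0 t) := by
  have h := (intervalIntegral.intervalIntegrable_rpow' (a := a) (b := a - t) hp).comp_sub_left a
  simp only [sub_self, sub_sub_cancel] at h
  exact h.def'.mono_set (Ioo_subset_Ioc_self.trans Ioc_subset_uIoc)

theorem integral_Ioo_rpow_sub {p a t : ℝ} (hp : -1 < p) (ht : 0 ≤ t) :
    ∫ s in Ioo 0 t, (a - s) ^ p = (a ^ (p + 1) - (a - t) ^ (p + 1)) / (p + 1) := by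
  rw [← integral_Ioc_eq_integral_Ioo, ← intervalIntegral.integral_of_le ht,
    intervalIntegral.integral_comp_sub_left (fun x => x ^ p), integral_rpow (Or.inl hp), sub_zero]

theorem lintegral_abs_rpow_sub_sub_rpow_add_sub {H t δ : ℝ} (hH : 0 < H) (ht : 0 ≤ t)
    (hδ : 0 ≤ δ) :
    ∫⁻ s in Ioo 0 t, ENNReal.ofReal |(t - s) ^ (H - 1) - (t + δ - s) ^ (H - 1)| =
      ENNReal.ofReal (|t ^ H + δ ^ H - (t + δ) ^ H| / H) := by
  have hp : -1 < H - 1 := by linarith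
  have hf : IntegrableOn (fun s => (t - s) ^ (H - 1) - (t + δ - s) ^ (H - 1)) (Ioo 0 t) :=
    (integrableOn_Ioo_rpow_sub hp).sub (integrableOn_Ioo_rpow_sub hp)
  have hsign :
      (0 ≤ᵐ[volume.restrict (Ioo 0 t)] fun s => (t - s) ^ (H - 1) - (t + δ - s) ^ (H - 1)) ∨
        (fun s => (t - s) ^ (H - 1) - (t + δ - s) ^ (H - 1)) ≤ᵐ[volume.restrict (Ioo 0 t)] 0 := by
    rcases le_total 0 (H - 1) with h | h
    · refine .inr <| (ae_restrict_mem measurableSet_Ioo).mono fun s hs => ?_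
      exact sub_nonpos.mpr (Real.rpow_le_rpow (by linarith [hs.2]) (by linarith) h)
    · refine .inl <| (ae_restrict_mem measurableSet_Ioo).mono fun s hs => ?_
      exact sub_nonneg.mpr (Real.rpow_le_rpow_of_nonpos (by linarith [hs.2]) (by linarith) h)
  rw [← ofReal_integral_eq_lintegral_ofReal hf.abs (ae_of_all _ fun _ => abs_nonneg _),
    integral_abs_eq_abs_integral hsign, integral_sub (integrableOn_Ioo_rpow_sub hp)
      (integrableOn_Ioo_rpow_sub hp), integral_Ioo_rpow_sub hp ht, integral_Ioo_rpow_sub hp ht]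
  simp only [sub_add_cancel, sub_self, add_sub_cancel_left, Real.zero_rpow hH.ne', sub_zero]
  rw [div_sub_div_same, abs_div, abs_of_pos hH, sub_sub_eq_add_sub]

theorem IsLeftEndpointMap.lintegral_abs_rpow_sub_le {T H t : ℝ} {π : TimePartition T}
    {η : ℝ → ℝ} (hη : IsLeftEndpointMap π η) (hH : 0 < H) (ht : t ∈ Icc 0 T) :
    ∫⁻ s in Ioo 0 t, ENNReal.ofReal |(t - s) ^ (H - 1) - (t - η s) ^ (H - 1)| ≤
      ENNReal.ofReal (|t ^ H + π.mesh ^ H - (t + π.mesh) ^ H| / H) := by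
  rw [← lintegral_abs_rpow_sub_sub_rpow_add_sub hH ht.1 π.mesh_nonneg]
  refine setLIntegral_mono' measurableSet_Ioo fun s hs => ENNReal.ofReal_le_ofReal ?_
  obtain ⟨hηs, hsη⟩ := hη.le_and_le_add_mesh hs.1.le (hs.2.trans_le ht.2)
  exact abs_rpow_sub_rpow_le_of_le (by linarith [hs.2]) (by linarith) (by linarith)

theorem abs_rpow_add_rpow_sub_rpow_add_le_of_le_one {H t δ : ℝ} (hH : 0 ≤ H) (hH1 : H ≤ 1)
    (ht : 0 ≤ t) (hδ : 0 ≤ δ) : |t ^ H + δ ^ H - (t + δ) ^ H| ≤ δ ^ H := by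
  have hsub := Real.rpow_add_le_add_rpow ht hδ hH hH1
  have hmono := Real.rpow_le_rpow ht (le_add_of_nonneg_right hδ) hH
  rw [abs_of_nonneg (by linarith)]
  linarith

theorem abs_rpow_add_rpow_sub_rpow_add_le_of_one_le {H t δ : ℝ} (hH : 1 ≤ H) (ht : 0 ≤ t)
    (hδ : 0 ≤ δ) : |t ^ H + δ ^ H - (t + δ) ^ H| ≤ H * (t + δ) ^ (H - 1) * δ := by
  have hsuper := Real.add_rpow_le_rpow_add ht hδ hH
  rw [abs_of_nonpos (by linarith)]
  rcases hδ.eq_or_lt with rfl | hδ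
  · simpa using Real.rpow_nonneg le_rfl H
  have hslope := (convexOn_rpow hH).slope_le_of_hasDerivAt (x := t) (y := t + δ) ht
    (mem_Ici.mpr (by linarith)) (by linarith) (Real.hasDerivAt_rpow_const (Or.inr hH))
  rw [slope_def_field, add_sub_cancel_left, div_le_iff₀ hδ] at hslope
  linarith [Real.rpow_nonneg hδ.le H]

/-- Condition (A4) for the fractional drift kernel `(t,s) ↦ (t-s)^{H-1}`
(part of Example 2.2 of the paper): for every `H > 0`, `T > 0` there is `C > 0`
(depending only on `H`, `T`) such that for every partition of `[0,T]` with mesh `δ_π`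
and left-endpoint map `η`, and every `t ∈ [0,T]`,
`∫_0^t |(t-s)^{H-1} - (t-η(s))^{H-1}| ds ≤ C δ_π^{min(H,1)}`. -/
theorem fractional_drift_kernel_A4 (H T : ℝ) (hH : 0 < H) (hT : 0 < T) :
    ∃ C : ℝ, 0 < C ∧
      ∀ (π : TimePartition T) (η : ℝ → ℝ), IsLeftEndpointMap π η →
      ∀ t : ℝ, t ∈ Icc (0 : ℝ) T →
        (∫⁻ s in Ioo (0 : ℝ) t,
            ENNReal.ofReal |(t - s) ^ (H - 1) - (t - η s) ^ (H - 1)|) ≤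
          ENNReal.ofReal (C * π.mesh ^ min H 1) := by
  rcases le_total H 1 with hH1 | hH1
  · refine ⟨1 / H, by positivity, fun π η hη t ht => ?_⟩
    refine (hη.lintegral_abs_rpow_sub_le hH ht).trans (ENNReal.ofReal_le_ofReal ?_)
    rw [min_eq_left hH1, one_div_mul_eq_div]
    gcongr
    exact abs_rpow_add_rpow_sub_rpow_add_le_of_le_one hH.le hH1 ht.1 π.mesh_nonneg
  · refine ⟨(2 * T) ^ (H - 1), by positivity, fun π η hη t ht => ?_⟩
    have hδ := π.mesh_nonneg
    have hsum : t + π.mesh ≤ 2 * T := by linarith [ht.2, π.mesh_le]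
    refine (hη.lintegral_abs_rpow_sub_le hH ht).trans (ENNReal.ofReal_le_ofReal ?_)
    rw [min_eq_right hH1, Real.rpow_one, div_le_iff₀ hH]
    calc _ ≤ H * (t + π.mesh) ^ (H - 1) * π.mesh :=
          abs_rpow_add_rpow_sub_rpow_add_le_of_one_le hH1 ht.1 hδ
      _ ≤ H * (2 * T) ^ (H - 1) * π.mesh := by gcongr; linarith [ht.1]
      _ = (2 * T) ^ (H - 1) * π.mesh * H := by ring
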